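/- arXiv:1203.6397 — 9 statements merged into one kernel-verified Lean document; each statement's English description precedes it below -/
import Mathlib

section
/- Let X and Y be disjoint finite subsets of a finite metric space (U,d). Then (|X| − 1)·d(X,Y) ≥ |Y|·d(X). -/
open Finset

/-- `dispSet d S` is the sum of `d u v` over all unordered pairs `{u,v}` of distinct
elements of `S` (for a symmetric `d` with `d u u = 0`, half the double sum). -/
noncomputable def dispSet {U : Type*} (d : U → U → ℝ) (S : Finset U) : ℝ :=
  (∑ u ∈ S, ∑ v ∈ S, d u v) / 2

/-- `dispBetween d S T` is the sum of `d u v` over all `u ∈ S` and `v ∈ T`. -/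
noncomputable def dispBetween {U : Type*} (d : U → U → ℝ) (S T : Finset U) : ℝ :=
  ∑ u ∈ S, ∑ v ∈ T, d u v

/-- If `X` and `Y` are disjoint finite subsets of a finite metric space `(U, d)`,
then `(|X| - 1) · d(X,Y) ≥ |Y| · d(X)`. -/
theorem stmt_0 {U : Type*} [Fintype U] (d : U → U → ℝ)
    (hsymm : ∀ u v, d u v = d v u)
    (hnonneg : ∀ u v, 0 ≤ d u v)
    (hrefl : ∀ u, d u u = 0)
    (htri : ∀ u v w, d u w ≤ d u v + d v w)
    (X Y : Finset U) (hXY : Disjoint X Y) :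
    ((X.card : ℝ) - 1) * dispBetween d X Y ≥ (Y.card : ℝ) * dispSet d X := by
  classical
  have key : ∀ y : U, ∑ u ∈ X, ∑ v ∈ X, d u v ≤ 2 * ((X.card : ℝ) - 1) * ∑ u ∈ X, d u y := by
    intro y
    calc ∑ u ∈ X, ∑ v ∈ X, d u v = ∑ u ∈ X, ∑ v ∈ X.erase u, d u v := by
          refine Finset.sum_congr rfl fun u hu => ?_
          rw [← Finset.sum_erase_add X _ hu, hrefl, add_zero]
      _ ≤ ∑ u ∈ X, ∑ v ∈ X.erase u, (d u y + d v y) := by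
          refine Finset.sum_le_sum fun u hu => Finset.sum_le_sum fun v hv => ?_
          calc d u v ≤ d u y + d y v := htri u y v
            _ = d u y + d v y := by rw [hsymm y v]
      _ = ∑ u ∈ X, (((X.card : ℝ) - 1) * d u y + ((∑ v ∈ X, d v y) - d u y)) := by
          refine Finset.sum_congr rfl fun u hu => ?_
          rw [Finset.sum_add_distrib, Finset.sum_const, Finset.card_erase_of_mem hu,
            ← Finset.sum_erase_add X (fun v => d v y) hu]
          have hc : (1 : ℕ) ≤ X.card := Finset.card_pos.mpr ⟨u, hu⟩
          have : ((X.card - 1 : ℕ) : ℝ) = (X.card : ℝ) - 1 := by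
            push_cast [hc]; ring
          rw [nsmul_eq_mul, this]; ring
      _ = 2 * ((X.card : ℝ) - 1) * ∑ u ∈ X, d u y := by
          rw [Finset.sum_add_distrib, ← Finset.mul_sum, Finset.sum_sub_distrib,
            Finset.sum_const, nsmul_eq_mul]
          ring
  have swap : dispBetween d X Y = ∑ y ∈ Y, ∑ u ∈ X, d u y := by
    rw [dispBetween, Finset.sum_comm]
  have h1 : (Y.card : ℝ) * dispSet d X ≤ ∑ y ∈ Y, ((X.card : ℝ) - 1) * ∑ u ∈ X, d u y := by
    calc (Y.card : ℝ) * dispSet d X = ∑ _y ∈ Y, dispSet d X := by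
          rw [Finset.sum_const, nsmul_eq_mul]
      _ ≤ ∑ y ∈ Y, ((X.card : ℝ) - 1) * ∑ u ∈ X, d u y := by
          refine Finset.sum_le_sum fun y _ => ?_
          have := key y
          rw [dispSet]; linarith
  rw [ge_iff_le, swap, Finset.mul_sum]
  exact h1
end

section
/- Let p ≥ 1 with |U| ≥ p, let f be a normalized, non-negative, monotone submodular set function on U, let λ ≥ 0, and let G_0 = ∅, G_{i+1} = G_i ∪ {u_{i+1}} for 0 ≤ i < p, where each u_{i+1} ∈ U∖G_i maximizes (1/2)(f(G_i∪{u}) − f(G_i)) + λ·Σ_{v∈G_i} d(u,v) over u ∈ U∖G_i. Then for every subset O ⊆ U with |O| = p, f(G_p) + λ·d(G_p) ≥ (1/2)·(f(O) + λ·d(O)). (The greedy algorithm is a 2-approximation for max-sum diversification with a cardinality constraint.) -/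
/-!
Write `F S = f S / 2 + λ d(S)`. The greedy gain at step `i` is `F G_{i+1} - F G_i`, so `F G_p` is
the sum of the gains. At step `i` every element of `A = O \ G_i` was a candidate, so the gain is at
least the average over `A` of their gains. Submodularity bounds the quality part of that average
below by `(f O - f G_p) / (2p)`, and the triangle inequality bounds the distance part below by
`i d(O) / (p (p - 1))`. Summing over `i < p` gives `F G_p ≥ (f O - f G_p) / 2 + λ d(O) / 2`.
-/

open Finset

section DistSum

variable {U : Type*} (d : U → U → ℝ)

def distSum (X Y : Finset U) : ℝ :=
  ∑ x ∈ X, ∑ y ∈ Y, d x y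

variable {d}

lemma dispSet_eq_distSum (S : Finset U) : dispSet d S = distSum d S S / 2 := rfl

lemma distSum_nonneg (hnonneg : ∀ u v, 0 ≤ d u v) (X Y : Finset U) : 0 ≤ distSum d X Y :=
  sum_nonneg fun x _ => sum_nonneg fun y _ => hnonneg x y

lemma distSum_comm (hsymm : ∀ u v, d u v = d v u) (X Y : Finset U) :
    distSum d X Y = distSum d Y X := by
  rw [distSum, distSum, sum_comm]
  simp only [hsymm]

lemma distSum_union_left [DecidableEq U] {X Y : Finset U} (h : Disjoint X Y) (Z : Finset U) :
    distSum d (X ∪ Y) Z = distSum d X Z + distSum d Y Z :=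
  sum_union h

lemma distSum_union_right [DecidableEq U] (X : Finset U) {Y Z : Finset U} (h : Disjoint Y Z) :
    distSum d X (Y ∪ Z) = distSum d X Y + distSum d X Z := by
  simp only [distSum, sum_union h, sum_add_distrib]

lemma distSum_self_le_sum_dist (hsymm : ∀ u v, d u v = d v u) (hrefl : ∀ u, d u u = 0)
    (htri : ∀ u v w, d u w ≤ d u v + d v w) (X : Finset U) (y : U) :
    distSum d X X ≤ 2 * ((#X : ℝ) - 1) * ∑ x ∈ X, d x y := by
  -- the diagonal term `x' = x` of the triangle bound `d x x' ≤ d x y + d x' y` is wasted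
  have hrow : ∀ x ∈ X, ∑ x' ∈ X, d x x' ≤ ∑ x' ∈ X, (d x y + d x' y) - 2 * d x y := by
    intro x hx
    have hdiag := single_le_sum (f := fun x' => d x y + d x' y - d x x')
      (fun x' _ => by linarith [htri x y x', hsymm y x']) hx
    simp only [hrefl, sub_zero, sum_sub_distrib] at hdiag
    linarith
  calc distSum d X X ≤ ∑ x ∈ X, (∑ x' ∈ X, (d x y + d x' y) - 2 * d x y) := sum_le_sum hrow
    _ = 2 * ((#X : ℝ) - 1) * ∑ x ∈ X, d x y := by
      simp only [sum_sub_distrib, sum_add_distrib, sum_const, nsmul_eq_mul, ← mul_sum]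
      ring

lemma card_mul_distSum_self_le (hsymm : ∀ u v, d u v = d v u) (hrefl : ∀ u, d u u = 0)
    (htri : ∀ u v w, d u w ≤ d u v + d v w) (X Y : Finset U) :
    #Y * distSum d X X ≤ 2 * ((#X : ℝ) - 1) * distSum d X Y := by
  calc #Y * distSum d X X = ∑ _y ∈ Y, distSum d X X := by rw [sum_const, nsmul_eq_mul]
    _ ≤ ∑ y ∈ Y, 2 * ((#X : ℝ) - 1) * ∑ x ∈ X, d x y :=
      sum_le_sum fun y _ => distSum_self_le_sum_dist hsymm hrefl htri X y
    _ = 2 * ((#X : ℝ) - 1) * distSum d X Y := by rw [← mul_sum, distSum, sum_comm]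

lemma dispSet_insert [DecidableEq U] (hsymm : ∀ u v, d u v = d v u) (hrefl : ∀ u, d u u = 0)
    {S : Finset U} {w : U} (hw : w ∉ S) :
    dispSet d (insert w S) = dispSet d S + ∑ x ∈ S, d w x := by
  simp only [dispSet, sum_insert hw, hrefl, zero_add, sum_add_distrib, hsymm _ w]
  ring

lemma dispSet_eq_zero_of_card_le_one (hrefl : ∀ u, d u u = 0) {S : Finset U} (hS : #S ≤ 1) :
    dispSet d S = 0 := by
  rcases Nat.le_one_iff_eq_zero_or_eq_one.mp hS with hS | hS
  · simp [card_eq_zero.mp hS, dispSet]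
  · obtain ⟨v, rfl⟩ := card_eq_one.mp hS
    simp [dispSet, hrefl]

/-- Splitting `O` into `A = O \ G` and `B = O ∩ G`, and `G` into `B` and `E = G \ O`, this
combines the triangle bounds `|B| d(A,A) ≤ 2(|A|-1) d(A,B)`, `|E| d(A,A) ≤ 2(|A|-1) d(A,E)` and
`|A| d(B,B) ≤ 2(|B|-1) d(A,B)` with weights `|O| - |G|`, `|O|` and `|G|`. -/
lemma card_sdiff_mul_card_mul_dispSet_le [DecidableEq U] (hsymm : ∀ u v, d u v = d v u)
    (hnonneg : ∀ u v, 0 ≤ d u v) (hrefl : ∀ u, d u u = 0)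
    (htri : ∀ u v w, d u w ≤ d u v + d v w) {O G : Finset U} (hGO : #G ≤ #O) :
    #(O \ G) * #G * dispSet d O ≤ #O * ((#O : ℝ) - 1) * distSum d (O \ G) G := by
  set A := O \ G
  set B := O ∩ G
  set E := G \ O
  have hO : A ∪ B = O := sdiff_union_inter O G
  have hBG : B = G ∩ O := inter_comm O G
  have hG : E ∪ B = G := hBG ▸ sdiff_union_inter G O
  have hAB : Disjoint A B := disjoint_sdiff_inter O G
  have hEB : Disjoint E B := hBG ▸ disjoint_sdiff_inter G O
  have hcardO : (#O : ℝ) = #A + #B := by rw [← hO, card_union_of_disjoint hAB]; push_cast; ring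
  have hcardG : (#G : ℝ) = #E + #B := by rw [← hG, card_union_of_disjoint hEB]; push_cast; ring
  have hdispO : dispSet d O = (distSum d A A + 2 * distSum d A B + distSum d B B) / 2 := by
    rw [dispSet_eq_distSum, ← hO, distSum_union_left hAB, distSum_union_right _ hAB,
      distSum_union_right _ hAB, distSum_comm hsymm B A]
    ring
  have hdistAG : distSum d A G = distSum d A B + distSum d A E := by
    rw [← hG, distSum_union_right _ hEB, add_comm]
  have hBA := card_mul_distSum_self_le hsymm hrefl htri A B
  have hEA := card_mul_distSum_self_le hsymm hrefl htri A E
  have hAB' := card_mul_distSum_self_le hsymm hrefl htri B A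
  rw [distSum_comm hsymm B A] at hAB'
  have hEA_le : (#E : ℝ) ≤ #A := by
    have : (#G : ℝ) ≤ #O := by exact_mod_cast hGO
    linarith
  have hBA_w := mul_le_mul_of_nonneg_left hBA (sub_nonneg.2 hEA_le)
  have hEA_w := mul_le_mul_of_nonneg_left hEA (by positivity : (0 : ℝ) ≤ #A + #B)
  have hAB_w := mul_le_mul_of_nonneg_left hAB' (by positivity : (0 : ℝ) ≤ #E + #B)
  have hAB_nonneg := mul_nonneg (mul_nonneg (sub_nonneg.2 hEA_le) (Nat.cast_nonneg #B))
    (distSum_nonneg hnonneg A B)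
  have hAE_nonneg := mul_nonneg (mul_nonneg (by positivity : (0 : ℝ) ≤ #A + #B) (Nat.cast_nonneg #B))
    (distSum_nonneg hnonneg A E)
  rw [hcardO, hcardG, hdispO, hdistAG]
  linear_combination (hBA_w + hEA_w + hAB_w) / 2 + hAB_nonneg + hAE_nonneg

lemma sum_range_mul_dispSet_div (hrefl : ∀ u, d u u = 0) (O : Finset U) :
    ∑ i ∈ range #O, (i : ℝ) * (dispSet d O / (#O * (#O - 1))) = dispSet d O / 2 := by
  have hgauss : ∀ n : ℕ, ∑ i ∈ range n, (i : ℝ) = n * (n - 1) / 2 := by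
    intro n
    induction n with
    | zero => simp
    | succ n ih => rw [sum_range_succ, ih]; push_cast; ring
  rw [← sum_mul, hgauss]
  rcases le_or_gt #O 1 with hO | hO
  · simp [dispSet_eq_zero_of_card_le_one hrefl hO]
  · have hO' : (1 : ℝ) < #O := by exact_mod_cast hO
    have hO₀ : (#O : ℝ) ≠ 0 := by positivity
    have hO₁ : (#O : ℝ) - 1 ≠ 0 := by linarith
    field_simp

end DistSum

lemma union_sub_le_sum_insert_sub {U : Type*} [DecidableEq U] {f : Finset U → ℝ}
    (hfsub : ∀ (S T : Finset U) (u : U), S ⊆ T → f (insert u T) - f T ≤ f (insert u S) - f S)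
    (S A : Finset U) : f (S ∪ A) - f S ≤ ∑ v ∈ A, (f (insert v S) - f S) := by
  induction A using Finset.induction_on with
  | empty => simp
  | insert w A hw ih =>
    rw [sum_insert hw, union_insert]
    linarith [hfsub S (S ∪ A) w subset_union_left]

section Greedy

variable {U : Type*} [DecidableEq U] (f : Finset U → ℝ) (d : U → U → ℝ) (lam : ℝ)

noncomputable def greedyGain (S : Finset U) (v : U) : ℝ :=
  (1 / 2) * (f (insert v S) - f S) + lam * ∑ x ∈ S, d v x

variable {f d lam}

lemma greedyGain_eq_sub (hsymm : ∀ u v, d u v = d v u) (hrefl : ∀ u, d u u = 0)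
    {S : Finset U} {v : U} (hv : v ∉ S) :
    greedyGain f d lam S v = ((1 / 2) * f (insert v S) + lam * dispSet d (insert v S)) -
      ((1 / 2) * f S + lam * dispSet d S) := by
  rw [greedyGain, dispSet_insert hsymm hrefl hv]
  ring

lemma le_greedyGain_of_forall_le (hsymm : ∀ u v, d u v = d v u) (hnonneg : ∀ u v, 0 ≤ d u v)
    (hrefl : ∀ u, d u u = 0) (htri : ∀ u v w, d u w ≤ d u v + d v w)
    (hfsub : ∀ (S T : Finset U) (u : U), S ⊆ T → f (insert u T) - f T ≤ f (insert u S) - f S)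
    (hlam : 0 ≤ lam) {S O : Finset U} (hSO : #S < #O) {w : U}
    (hw : ∀ v ∉ S, greedyGain f d lam S v ≤ greedyGain f d lam S w)
    {M : ℝ} (hM0 : 0 ≤ M) (hM : M ≤ f (S ∪ O) - f S) :
    M / (2 * #O) + lam * (#S * (dispSet d O / (#O * (#O - 1)))) ≤ greedyGain f d lam S w := by
  set A := O \ S
  have hA_pos : (0 : ℝ) < #A := by
    have : 0 < #(O \ S) := by have := le_card_sdiff S O; omega
    exact_mod_cast this
  have hO_pos : (0 : ℝ) < #O := by exact_mod_cast hSO.trans_le' (Nat.zero_le _)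
  have hA_le : (#A : ℝ) ≤ #O := by exact_mod_cast card_le_card sdiff_subset
  have havg : ∑ v ∈ A, greedyGain f d lam S v ≤ #A * greedyGain f d lam S w := by
    rw [← nsmul_eq_mul]
    exact sum_le_card_nsmul _ _ _ fun v hv => hw v (mem_sdiff.mp hv).2
  have hsplit : ∑ v ∈ A, greedyGain f d lam S v =
      (1 / 2) * ∑ v ∈ A, (f (insert v S) - f S) + lam * distSum d A S := by
    simp only [greedyGain, sum_add_distrib, ← mul_sum, distSum]
  have hmarg : M ≤ ∑ v ∈ A, (f (insert v S) - f S) := by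
    have := union_sub_le_sum_insert_sub hfsub S A
    rw [union_sdiff_self_eq_union] at this
    linarith
  have hquality : #A * (M / (2 * #O)) ≤ (1 / 2) * M := by
    rw [mul_div_assoc', div_le_iff₀ (by positivity)]
    nlinarith
  have hdist : #A * (#S * (dispSet d O / (#O * (#O - 1)))) ≤ distSum d A S := by
    rcases le_or_gt #O 1 with hO | hO
    · have : #S = 0 := by omega
      simp [this, distSum_nonneg hnonneg]
    · have hO' : (1 : ℝ) < #O := by exact_mod_cast hO
      rw [← mul_assoc, mul_div_assoc', div_le_iff₀ (mul_pos hO_pos (by linarith)),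
        mul_comm _ (_ * _)]
      exact card_sdiff_mul_card_mul_dispSet_le hsymm hnonneg hrefl htri hSO.le
  refine le_of_mul_le_mul_left ?_ hA_pos
  calc #A * (M / (2 * #O) + lam * (#S * (dispSet d O / (#O * (#O - 1)))))
      = #A * (M / (2 * #O)) + lam * (#A * (#S * (dispSet d O / (#O * (#O - 1))))) := by ring
    _ ≤ (1 / 2) * ∑ v ∈ A, (f (insert v S) - f S) + lam * distSum d A S :=
      add_le_add (hquality.trans (by linarith)) (mul_le_mul_of_nonneg_left hdist hlam)
    _ ≤ #A * greedyGain f d lam S w := hsplit ▸ havg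

end Greedy

section InsertChain

variable {U : Type*} [DecidableEq U] {G : ℕ → Finset U} {u : ℕ → U} {p : ℕ}

lemma card_of_insert_chain (hG0 : G 0 = ∅)
    (hnext : ∀ i < p, u i ∉ G i ∧ G (i + 1) = insert (u i) (G i)) : ∀ i ≤ p, #(G i) = i := by
  intro i hi
  induction i with
  | zero => simp [hG0]
  | succ i ih => rw [(hnext i hi).2, card_insert_of_notMem (hnext i hi).1, ih (by omega)]

lemma subset_of_insert_chain (hnext : ∀ i < p, u i ∉ G i ∧ G (i + 1) = insert (u i) (G i))
    {i j : ℕ} (hij : i ≤ j) : j ≤ p → G i ⊆ G j := by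
  induction j, hij using Nat.le_induction with
  | base => exact fun _ => subset_rfl
  | succ j _ ih =>
    exact fun hj => (ih (by omega)).trans ((hnext j (by omega)).2 ▸ subset_insert _ _)

lemma sum_greedyGain_of_insert_chain {f : Finset U → ℝ} {d : U → U → ℝ} {lam : ℝ}
    (hsymm : ∀ u v, d u v = d v u) (hrefl : ∀ u, d u u = 0) (hf0 : f ∅ = 0) (hG0 : G 0 = ∅)
    (hnext : ∀ i < p, u i ∉ G i ∧ G (i + 1) = insert (u i) (G i)) :
    ∑ i ∈ range p, greedyGain f d lam (G i) (u i) = (1 / 2) * f (G p) + lam * dispSet d (G p) := by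
  let F : ℕ → ℝ := fun i => (1 / 2) * f (G i) + lam * dispSet d (G i)
  have hF0 : F 0 = 0 := by simp [F, hG0, hf0, dispSet]
  rw [show (1 / 2) * f (G p) + lam * dispSet d (G p) = F p - F 0 by rw [hF0, sub_zero],
    ← sum_range_sub]
  refine sum_congr rfl fun i hi => ?_
  obtain ⟨hui, hG⟩ := hnext i (mem_range.mp hi)
  rw [greedyGain_eq_sub hsymm hrefl hui, ← hG]

end InsertChain

theorem stmt_1_general {U : Type*} [DecidableEq U] (d : U → U → ℝ)
    (hsymm : ∀ u v, d u v = d v u)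
    (hnonneg : ∀ u v, 0 ≤ d u v)
    (hrefl : ∀ u, d u u = 0)
    (htri : ∀ u v w, d u w ≤ d u v + d v w)
    (f : Finset U → ℝ)
    (hf0 : f ∅ = 0)
    (hfmono : ∀ S T : Finset U, S ⊆ T → f S ≤ f T)
    (hfsub : ∀ (S T : Finset U) (u : U), S ⊆ T →
      f (insert u T) - f T ≤ f (insert u S) - f S)
    (lam : ℝ) (hlam : 0 ≤ lam)
    (p : ℕ) (hp : 1 ≤ p)
    (G : ℕ → Finset U) (u : ℕ → U)
    (hG0 : G 0 = ∅)
    (hstep : ∀ i < p, u i ∉ G i ∧ G (i + 1) = insert (u i) (G i) ∧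
      ∀ v ∉ G i,
        (1 / 2) * (f (insert v (G i)) - f (G i)) + lam * ∑ x ∈ G i, d v x ≤
        (1 / 2) * (f (insert (u i) (G i)) - f (G i)) + lam * ∑ x ∈ G i, d (u i) x)
    (O : Finset U) (hO : O.card = p) :
    f (G p) + lam * dispSet d (G p) ≥ (1 / 2) * (f O + lam * dispSet d O) := by
  subst hO
  have hnext i (hi : i < #O) := And.intro (hstep i hi).1 (hstep i hi).2.1
  have hcard := card_of_insert_chain hG0 hnext
  set M := max (f O - f (G #O)) 0
  have hbound : ∀ i ∈ range #O, M / (2 * #O) + lam * (i * (dispSet d O / (#O * (#O - 1)))) ≤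
      greedyGain f d lam (G i) (u i) := by
    intro i hi
    have hi := mem_range.mp hi
    have hM_le : M ≤ f (G i ∪ O) - f (G i) := max_le
      (by linarith [hfmono O (G i ∪ O) subset_union_right,
        hfmono _ _ (subset_of_insert_chain hnext hi.le le_rfl)])
      (by linarith [hfmono (G i) (G i ∪ O) subset_union_left])
    have := le_greedyGain_of_forall_le hsymm hnonneg hrefl htri hfsub hlam
      (by rw [hcard i hi.le]; exact hi) (hstep i hi).2.2 (le_max_right _ _) hM_le
    rwa [hcard i hi.le] at this
  have hsum := sum_le_sum hbound
  rw [sum_add_distrib, sum_const, card_range, nsmul_eq_mul, ← mul_sum,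
    sum_range_mul_dispSet_div hrefl, sum_greedyGain_of_insert_chain hsymm hrefl hf0 hG0 hnext]
    at hsum
  have hM : (#O : ℝ) * (M / (2 * #O)) = M / 2 := by
    have : (#O : ℝ) ≠ 0 := by positivity
    field_simp
  linarith [le_max_left (f O - f (G #O)) 0]

/-- The greedy algorithm (choosing at each step an element maximizing
`(1/2)·(marginal gain of f) + λ·(marginal distance gain)`) is a 2-approximation for
max-sum diversification with a normalized, non-negative, monotone submodular quality
function subject to a cardinality constraint. -/
theorem stmt_1 {U : Type*} [Fintype U] [DecidableEq U] (d : U → U → ℝ)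
    (hsymm : ∀ u v, d u v = d v u)
    (hnonneg : ∀ u v, 0 ≤ d u v)
    (hrefl : ∀ u, d u u = 0)
    (htri : ∀ u v w, d u w ≤ d u v + d v w)
    (f : Finset U → ℝ)
    (hf0 : f ∅ = 0)
    (hfnonneg : ∀ S, 0 ≤ f S)
    (hfmono : ∀ S T : Finset U, S ⊆ T → f S ≤ f T)
    (hfsub : ∀ (S T : Finset U) (u : U), S ⊆ T →
      f (insert u T) - f T ≤ f (insert u S) - f S)
    (lam : ℝ) (hlam : 0 ≤ lam)
    (p : ℕ) (hp : 1 ≤ p) (hUp : p ≤ Fintype.card U)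
    (G : ℕ → Finset U) (u : ℕ → U)
    (hG0 : G 0 = ∅)
    (hstep : ∀ i < p, u i ∉ G i ∧ G (i + 1) = insert (u i) (G i) ∧
      ∀ v ∉ G i,
        (1 / 2) * (f (insert v (G i)) - f (G i)) + lam * ∑ x ∈ G i, d v x ≤
        (1 / 2) * (f (insert (u i) (G i)) - f (G i)) + lam * ∑ x ∈ G i, d (u i) x)
    (O : Finset U) (hO : O.card = p) :
    f (G p) + lam * dispSet d (G p) ≥ (1 / 2) * (f O + lam * dispSet d O) :=
  stmt_1_general d hsymm hnonneg hrefl htri f hf0 hfmono hfsub lam hlam p hp G u hG0 hstep O hO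
end

section
/- Let G and O be finite subsets of a finite metric space (U,d) with |G| = i, |O| = p, i < p, and let C = O∖G. If |C| ≥ 2, then d(C, G) ≥ (i·|C| / (p(p−1)))·d(O). -/
open Finset

/-- Routing pairs of `S` through points of `T`:
`|T| · (∑∑_{S×S} d) ≤ 2(|S|-1) · (∑_{S×T} d)`. -/
lemma tri_sum_aux {U : Type*} [DecidableEq U] (d : U → U → ℝ)
    (hsymm : ∀ u v, d u v = d v u)
    (hrefl : ∀ u, d u u = 0)
    (htri : ∀ u v w, d u w ≤ d u v + d v w)
    (S T : Finset U) :
    (T.card : ℝ) * (∑ u ∈ S, ∑ v ∈ S, d u v) ≤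
      2 * ((S.card : ℝ) - 1) * (∑ u ∈ S, ∑ w ∈ T, d u w) := by
  classical
  set X : U → ℝ := fun z => ∑ w ∈ T, d z w with hX
  have hdiag : ∀ u ∈ S, ∑ v ∈ S, d u v = ∑ v ∈ S.erase u, d u v := by
    intro u _
    exact (Finset.sum_erase S (hrefl u)).symm
  have step1 : (T.card : ℝ) * (∑ u ∈ S, ∑ v ∈ S, d u v)
      = ∑ u ∈ S, ∑ v ∈ S.erase u, (T.card : ℝ) * d u v := by
    rw [Finset.mul_sum]
    refine Finset.sum_congr rfl fun u hu => ?_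
    rw [hdiag u hu, Finset.mul_sum]
  have step2 : ∑ u ∈ S, ∑ v ∈ S.erase u, (T.card : ℝ) * d u v
      ≤ ∑ u ∈ S, ∑ v ∈ S.erase u, (X u + X v) := by
    refine Finset.sum_le_sum fun u _ => Finset.sum_le_sum fun v _ => ?_
    have h1 : (T.card : ℝ) * d u v = ∑ _w ∈ T, d u v := by
      rw [Finset.sum_const, nsmul_eq_mul]
    have h2 : X u + X v = ∑ w ∈ T, (d u w + d v w) := by
      rw [hX]; simp [Finset.sum_add_distrib]
    rw [h1, h2]
    refine Finset.sum_le_sum fun w _ => ?_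
    calc d u v ≤ d u w + d w v := htri u w v
      _ = d u w + d v w := by rw [hsymm w v]
  have step3 : ∑ u ∈ S, ∑ v ∈ S.erase u, (X u + X v)
      = 2 * ((S.card : ℝ) - 1) * (∑ u ∈ S, X u) := by
    have h : ∀ u ∈ S, ∑ v ∈ S.erase u, (X u + X v)
        = ((S.card : ℝ) - 1) * X u + ((∑ v ∈ S, X v) - X u) := by
      intro u hu
      rw [Finset.sum_add_distrib, Finset.sum_const, nsmul_eq_mul,
        Finset.cast_card_erase_of_mem hu]
      congr 1
      have := Finset.sum_erase_add S X hu
      linarith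
    rw [Finset.sum_congr rfl h, Finset.sum_add_distrib, ← Finset.mul_sum,
      Finset.sum_sub_distrib, Finset.sum_const, nsmul_eq_mul]
    ring
  calc (T.card : ℝ) * (∑ u ∈ S, ∑ v ∈ S, d u v)
      = ∑ u ∈ S, ∑ v ∈ S.erase u, (T.card : ℝ) * d u v := step1
    _ ≤ ∑ u ∈ S, ∑ v ∈ S.erase u, (X u + X v) := step2
    _ = 2 * ((S.card : ℝ) - 1) * (∑ u ∈ S, X u) := step3

/-- The purely arithmetic core of the argument. -/
lemma key_ineq (a b c sC sA D s : ℝ) (ha : 0 ≤ a) (hb : 0 ≤ b) (hc : 2 ≤ c)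
    (hbc : b ≤ c) (hsC : 0 ≤ sC)
    (H1 : a * sC ≤ 2 * (c - 1) * D) (H2 : b * sC ≤ 2 * (c - 1) * s)
    (H3 : c * sA ≤ 2 * (a - 1) * D) :
    (a + b) * c * (sC + sA + 2 * D) ≤ 2 * (a + c) * ((a + c) - 1) * (D + s) := by
  have hc1 : (0 : ℝ) < c - 1 := by linarith
  have m1 : (0 : ℝ) ≤ (a + c - 1) * (c - b) :=
    mul_nonneg (by linarith) (by linarith)
  have m2 : (0 : ℝ) ≤ (a + c) * (a + c - 1) :=
    mul_nonneg (by linarith) (by linarith)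
  have m3 : (0 : ℝ) ≤ (a + b) * (c - 1) :=
    mul_nonneg (by linarith) (by linarith)
  have F1 := mul_le_mul_of_nonneg_left H1 m1
  have F2 := mul_le_mul_of_nonneg_left H2 m2
  have F3 := mul_le_mul_of_nonneg_left H3 m3
  have F4 : (0 : ℝ) ≤ a * ((a + b) * (c * sC)) :=
    mul_nonneg ha (mul_nonneg (by linarith) (mul_nonneg (by linarith) hsC))
  have key : (c - 1) * ((a + b) * c * (sC + sA + 2 * D))
      ≤ (c - 1) * (2 * (a + c) * ((a + c) - 1) * (D + s)) := by
    nlinarith [F1, F2, F3, F4]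
  exact le_of_mul_le_mul_left key hc1

/-- If `|G| = i`, `|O| = p`, `i < p` and `C = O \ G` has at least two elements, then
`d(C, G) ≥ (i·|C| / (p(p-1))) · d(O)`. -/
theorem stmt_2 {U : Type*} [Fintype U] [DecidableEq U] (d : U → U → ℝ)
    (hsymm : ∀ u v, d u v = d v u)
    (hnonneg : ∀ u v, 0 ≤ d u v)
    (hrefl : ∀ u, d u u = 0)
    (htri : ∀ u v w, d u w ≤ d u v + d v w)
    (G O : Finset U) (i p : ℕ)
    (hG : G.card = i) (hO : O.card = p) (hip : i < p)
    (hC : 2 ≤ (O \ G).card) :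
    dispBetween d (O \ G) G ≥
      ((i : ℝ) * ((O \ G).card : ℝ) / ((p : ℝ) * ((p : ℝ) - 1))) * dispSet d O := by
  classical
  subst hG hO
  set C : Finset U := O \ G with hCdef
  set A : Finset U := O ∩ G with hAdef
  set B : Finset U := G \ O with hBdef
  -- real card abbreviations
  set a : ℝ := (A.card : ℝ) with haDef
  set b : ℝ := (B.card : ℝ) with hbDef
  set c : ℝ := (C.card : ℝ) with hcDef
  -- sums
  set sC : ℝ := ∑ u ∈ C, ∑ v ∈ C, d u v with hsCdef
  set sA : ℝ := ∑ u ∈ A, ∑ v ∈ A, d u v with hsAdef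
  set D : ℝ := ∑ u ∈ C, ∑ v ∈ A, d u v with hDdef
  set s : ℝ := ∑ u ∈ C, ∑ v ∈ B, d u v with hsdef
  have hswap : ∀ (S T : Finset U), ∑ u ∈ S, ∑ v ∈ T, d u v = ∑ u ∈ T, ∑ v ∈ S, d u v := by
    intro S T
    rw [Finset.sum_comm]
    exact Finset.sum_congr rfl fun u _ => Finset.sum_congr rfl fun v _ => hsymm v u
  -- card identities
  have hcard_O : C.card + A.card = O.card := Finset.card_sdiff_add_card_inter O G
  have hcard_G : B.card + (G ∩ O).card = G.card := Finset.card_sdiff_add_card_inter G O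
  have hGO : G ∩ O = A := by rw [hAdef, Finset.inter_comm]
  have hp : (O.card : ℝ) = c + a := by
    rw [← hcard_O]; push_cast; ring
  have hi : (G.card : ℝ) = b + a := by
    rw [← hcard_G, hGO]; push_cast; ring
  -- decomposition of the double sum over O
  have hOsplit : ∑ u ∈ O, ∑ v ∈ O, d u v = sC + sA + 2 * D := by
    have inner : ∀ u : U, ∑ v ∈ O, d u v = (∑ v ∈ A, d u v) + ∑ v ∈ C, d u v := by
      intro u
      rw [hAdef, hCdef, Finset.sum_inter_add_sum_sdiff]
    calc ∑ u ∈ O, ∑ v ∈ O, d u v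
        = ∑ u ∈ O, ((∑ v ∈ A, d u v) + ∑ v ∈ C, d u v) := by
          exact Finset.sum_congr rfl fun u _ => inner u
      _ = (∑ u ∈ O, ∑ v ∈ A, d u v) + ∑ u ∈ O, ∑ v ∈ C, d u v := Finset.sum_add_distrib
      _ = ((∑ u ∈ A, ∑ v ∈ A, d u v) + ∑ u ∈ C, ∑ v ∈ A, d u v)
          + ((∑ u ∈ A, ∑ v ∈ C, d u v) + ∑ u ∈ C, ∑ v ∈ C, d u v) := by
          rw [← Finset.sum_inter_add_sum_sdiff O G (fun u => ∑ v ∈ A, d u v),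
            ← Finset.sum_inter_add_sum_sdiff O G (fun u => ∑ v ∈ C, d u v)]
      _ = sC + sA + 2 * D := by
          rw [hswap A C]
          rw [hsCdef, hsAdef, hDdef]; ring
  -- decomposition of dispBetween
  have hXsplit : dispBetween d C G = D + s := by
    rw [dispBetween]
    have inner : ∀ u : U, ∑ v ∈ G, d u v = (∑ v ∈ A, d u v) + ∑ v ∈ B, d u v := by
      intro u
      rw [← hGO, hBdef, Finset.sum_inter_add_sum_sdiff]
    calc ∑ u ∈ C, ∑ v ∈ G, d u v
        = ∑ u ∈ C, ((∑ v ∈ A, d u v) + ∑ v ∈ B, d u v) :=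
          Finset.sum_congr rfl fun u _ => inner u
      _ = D + s := by rw [Finset.sum_add_distrib]
  -- triangle inequalities
  have H1 : a * sC ≤ 2 * (c - 1) * D := tri_sum_aux d hsymm hrefl htri C A
  have H2 : b * sC ≤ 2 * (c - 1) * s := tri_sum_aux d hsymm hrefl htri C B
  have H3 : c * sA ≤ 2 * (a - 1) * D := by
    have := tri_sum_aux d hsymm hrefl htri A C
    rwa [hswap A C] at this
  -- nonnegativity
  have hsC0 : 0 ≤ sC := Finset.sum_nonneg fun u _ => Finset.sum_nonneg fun v _ => hnonneg u v
  have ha0 : 0 ≤ a := by rw [haDef]; positivity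
  have hb0 : 0 ≤ b := by rw [hbDef]; positivity
  have hc2 : (2 : ℝ) ≤ c := by rw [hcDef]; exact_mod_cast hC
  have hbc : b ≤ c := by
    have : (G.card : ℝ) < (O.card : ℝ) := by exact_mod_cast hip
    rw [hp, hi] at this; linarith
  have key := key_ineq a b c sC sA D s ha0 hb0 hc2 hbc hsC0 H1 H2 H3
  -- finish
  have hposden : (0 : ℝ) < (O.card : ℝ) * ((O.card : ℝ) - 1) := by
    rw [hp]; nlinarith
  rw [ge_iff_le, div_mul_eq_mul_div, div_le_iff₀ hposden]
  rw [hXsplit, hp, hi, dispSet, hOsplit]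
  nlinarith [key]
end

section
/- Let M be a matroid on a finite ground set U, and let X and Y be independent sets of M with |X| = |Y|. Then there is a bijection g: X → Y such that for every x ∈ X, the set (X∖{x}) ∪ {g(x)} is independent in M. -/
open Finset

private lemma aux_extend {U : Type*} [DecidableEq U] (Ind : Finset U → Prop)
    (h_aug : ∀ ⦃A B : Finset U⦄, Ind A → Ind B → B.card < A.card →
      ∃ e ∈ A \ B, Ind (insert e B)) :
    ∀ n (A B : Finset U), Ind A → Ind B → A.card + n = B.card →
      ∃ Z, A ⊆ Z ∧ Z ⊆ A ∪ B ∧ Ind Z ∧ Z.card = B.card := by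
  intro n
  induction n with
  | zero => intro A B hA hB hc; exact ⟨A, Subset.rfl, subset_union_left, hA, by omega⟩
  | succ k ih =>
    intro A B hA hB hc
    obtain ⟨e, he, hInd⟩ := h_aug hB hA (by omega)
    simp only [mem_sdiff] at he
    have hcard : (insert e A).card = A.card + 1 := card_insert_of_notMem he.2
    obtain ⟨Z, h1, h2, h3, h4⟩ := ih (insert e A) B hInd hB (by omega)
    refine ⟨Z, (subset_insert _ _).trans h1, fun x hx => ?_, h3, h4⟩
    rcases mem_union.mp (h2 hx) with h | h
    · rcases mem_insert.mp h with rfl | h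
      · exact mem_union_right _ he.1
      · exact mem_union_left _ h
    · exact mem_union_right _ h

private lemma aux_span {U : Type*} [DecidableEq U] (Ind : Finset U → Prop)
    (h_aug : ∀ ⦃A B : Finset U⦄, Ind A → Ind B → B.card < A.card →
      ∃ e ∈ A \ B, Ind (insert e B))
    (A B : Finset U) (hA : Ind A) (hB : Ind B)
    (hsp : ∀ b ∈ B, b ∉ A → ¬ Ind (insert b A)) : B.card ≤ A.card := by
  by_contra h
  obtain ⟨e, he, hInd⟩ := h_aug hB hA (by omega)
  simp only [mem_sdiff] at he
  exact hsp e he.1 he.2 hInd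

/-- For a matroid (given by its independent sets `Ind`) and independent sets `X`, `Y`
with `|X| = |Y|`, there is a bijection `g : X → Y` such that `(X \ {x}) ∪ {g x}` is
independent for every `x ∈ X`. -/
theorem stmt_4 {U : Type*} [Fintype U] [DecidableEq U]
    (Ind : Finset U → Prop)
    (h_empty : Ind ∅)
    (h_hered : ∀ ⦃S T : Finset U⦄, Ind T → S ⊆ T → Ind S)
    (h_aug : ∀ ⦃A B : Finset U⦄, Ind A → Ind B → B.card < A.card →
      ∃ e ∈ A \ B, Ind (insert e B))
    (X Y : Finset U) (hX : Ind X) (hY : Ind Y) (hcard : X.card = Y.card) :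
    ∃ g : U → U, Set.BijOn g ↑X ↑Y ∧ ∀ x ∈ X, Ind (insert (g x) (X.erase x)) := by
  classical
  set t : {x // x ∈ X} → Finset U :=
    fun x => Y.filter (fun y => Ind (insert y (X.erase x.1))) with ht
  have hall : ∀ s : Finset {x // x ∈ X}, s.card ≤ (s.biUnion t).card := by
    intro s
    rcases s.eq_empty_or_nonempty with rfl | ⟨x0, hx0⟩
    · simp
    set S : Finset U := s.image Subtype.val with hS
    have hScard : S.card = s.card := card_image_of_injective _ Subtype.val_injective
    have hSsub : S ⊆ X := by
      intro x hx; obtain ⟨a, _, rfl⟩ := mem_image.mp hx; exact a.2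
    set N : Finset U := s.biUnion t with hN
    have hNY : N ⊆ Y := by
      intro y hy
      obtain ⟨a, _, hya⟩ := mem_biUnion.mp hy
      exact (mem_filter.mp hya).1
    -- every y ∈ Y \ N is not independent over X \ S
    have key : ∀ y ∈ Y \ N, y ∉ X \ S → ¬ Ind (insert y (X \ S)) := by
      rintro y hy -
      simp only [mem_sdiff] at hy
      obtain ⟨hyY, hyN⟩ := hy
      have hmemN : ∀ x : {x // x ∈ X}, x ∈ s → Ind (insert y (X.erase x.1)) → y ∈ N := by
        intro x hxs hind
        exact mem_biUnion.mpr ⟨x, hxs, mem_filter.mpr ⟨hyY, hind⟩⟩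
      -- y ∉ X
      have hyX : y ∉ X := by
        intro hyX
        by_cases hyS : y ∈ S
        · obtain ⟨a, has, ha⟩ := mem_image.mp hyS
          have heq : insert y (X.erase a.1) = X := by rw [ha, insert_erase hyX]
          exact hyN (hmemN a has (by rw [heq]; exact hX))
        · have hye : y ∈ X.erase x0.1 := by
            refine mem_erase.mpr ⟨?_, hyX⟩
            rintro rfl
            exact hyS (mem_image.mpr ⟨x0, hx0, rfl⟩)
          have heq : insert y (X.erase x0.1) = X.erase x0.1 := insert_eq_self.mpr hye
          exact hyN (hmemN x0 hx0 (by rw [heq]; exact h_hered hX (erase_subset _ _)))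
      intro hind
      -- extend insert y (X \ S) inside insert y X to size |X|
      have hx0X : (x0 : U) ∈ S := mem_image.mpr ⟨x0, hx0, rfl⟩
      have hcard1 : (insert y (X \ S)).card = (X \ S).card + 1 :=
        card_insert_of_notMem (fun h => hyX (mem_sdiff.mp h).1)
      have hXS : (X \ S).card + S.card = X.card := by
        rw [card_sdiff_add_card_eq_card hSsub]
      have hSpos : 0 < S.card := card_pos.mpr ⟨x0, hx0X⟩
      obtain ⟨Z, hZ1, hZ2, hZ3, hZ4⟩ :=
        aux_extend Ind h_aug (X.card - (X \ S).card - 1) (insert y (X \ S)) X hind hX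
          (by omega)
      have hyZ : y ∈ Z := hZ1 (mem_insert_self _ _)
      have hZsub : Z ⊆ insert y X := by
        intro z hz
        rcases mem_union.mp (hZ2 hz) with h | h
        · rcases mem_insert.mp h with rfl | h
          · exact mem_insert_self _ _
          · exact mem_insert_of_mem (mem_sdiff.mp h).1
        · exact mem_insert_of_mem h
      have hZe : Z.erase y ⊆ X := by
        intro z hz
        have := hZsub (erase_subset _ _ hz)
        rcases mem_insert.mp this with rfl | h
        · exact absurd rfl (mem_erase.mp hz).1
        · exact h
      have hZecard : (Z.erase y).card = X.card - 1 := by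
        rw [card_erase_of_mem hyZ, hZ4]
      have hXpos : 0 < X.card := card_pos.mpr ⟨x0.1, x0.2⟩
      have : (X \ Z.erase y).card = 1 := by
        rw [card_sdiff_of_subset hZe]; omega
      obtain ⟨x, hx⟩ := card_eq_one.mp this
      have hxX : x ∈ X := by
        have : x ∈ X \ Z.erase y := hx ▸ mem_singleton_self x
        exact (mem_sdiff.mp this).1
      have hZeq : Z.erase y = X.erase x := by
        apply eq_of_subset_of_card_le
        · intro z hz
          refine mem_erase.mpr ⟨?_, hZe hz⟩
          rintro rfl
          have : z ∈ X \ Z.erase y := hx ▸ mem_singleton_self z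
          exact (mem_sdiff.mp this).2 hz
        · rw [card_erase_of_mem hxX, hZecard]
      have hxS : x ∈ S := by
        by_contra hxS
        have hxZ : x ∈ Z := hZ1 (mem_insert_of_mem (mem_sdiff.mpr ⟨hxX, hxS⟩))
        have hxZe : x ∈ Z.erase y := mem_erase.mpr ⟨by rintro rfl; exact hyX hxX, hxZ⟩
        rw [hZeq] at hxZe
        exact (mem_erase.mp hxZe).1 rfl
      obtain ⟨a, has, ha⟩ := mem_image.mp hxS
      have hZfull : Z = insert y (X.erase a.1) := by
        rw [ha, ← hZeq, insert_erase hyZ]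
      exact hyN (hmemN a has (by rw [← hZfull]; exact hZ3))
    have hspan := aux_span Ind h_aug (X \ S) (Y \ N)
      (h_hered hX (sdiff_subset)) (h_hered hY (sdiff_subset)) key
    have h1 : (Y \ N).card = Y.card - N.card := card_sdiff_of_subset hNY
    have h2 : (X \ S).card = X.card - S.card := card_sdiff_of_subset hSsub
    have hNle : N.card ≤ Y.card := card_le_card hNY
    have hSle : S.card ≤ X.card := card_le_card hSsub
    omega
  obtain ⟨f, hfinj, hft⟩ := (Finset.all_card_le_biUnion_card_iff_exists_injective t).mp hall
  set g : U → U := fun u => if h : u ∈ X then f ⟨u, h⟩ else u with hg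
  have hgY : ∀ x (h : x ∈ X), g x ∈ Y ∧ Ind (insert (g x) (X.erase x)) := by
    intro x h
    have := hft ⟨x, h⟩
    simp only [ht, mem_filter] at this
    simp only [hg, dif_pos h]
    exact this
  have hmaps : Set.MapsTo g ↑X ↑Y := fun x hx => by
    simpa using (hgY x (by simpa using hx)).1
  have hinj : Set.InjOn g ↑X := by
    intro a ha b hb hab
    simp only [Finset.mem_coe] at ha hb
    simp only [hg, dif_pos ha, dif_pos hb] at hab
    exact congrArg Subtype.val (hfinj hab)
  have himg : X.image g = Y := by
    apply eq_of_subset_of_card_le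
    · intro y hy
      obtain ⟨x, hx, rfl⟩ := mem_image.mp hy
      exact (hgY x hx).1
    · rw [card_image_of_injOn (by simpa using hinj)]
      omega
  have hsurj : Set.SurjOn g ↑X ↑Y := by
    intro y hy
    have : y ∈ X.image g := himg ▸ (by simpa using hy)
    obtain ⟨x, hx, rfl⟩ := mem_image.mp this
    exact ⟨x, by simpa using hx, rfl⟩
  exact ⟨g, ⟨hmaps, hinj, hsurj⟩, fun x hx => (hgY x hx).2⟩
end

section
/- Let f be a submodular set function on a finite set U, let S ⊆ U, let b_1, …, b_t be distinct elements of S, and let c_1, …, c_t be distinct elements of U∖S. Then f(S) + Σ_{i=1}^{t} f((S∖{b_i})∪{c_i}) ≥ f(S∖{b_1,…,b_t}) + Σ_{i=1}^{t} f(S∪{c_i}). -/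
open Finset

lemma aux_erase_sum {U : Type*} [Fintype U] [DecidableEq U]
    (f : Finset U → ℝ)
    (hfsub : ∀ (S T : Finset U) (u : U), S ⊆ T →
      f (insert u T) - f T ≤ f (insert u S) - f S) :
    ∀ (t : ℕ) (b : Fin t → U) (S : Finset U), Function.Injective b →
      (∀ i, b i ∈ S) →
      ∑ i, (f S - f (S.erase (b i))) ≤ f S - f (S \ Finset.image b Finset.univ) := by
  intro t
  induction t with
  | zero =>
      intro b S _ _
      simp
  | succ n ih =>
      intro b S hbinj hbS
      set b' : Fin n → U := b ∘ Fin.castSucc with hb'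
      have hb'inj : Function.Injective b' := hbinj.comp (Fin.castSucc_injective n)
      have hb'S : ∀ i, b' i ∈ S := fun i => hbS _
      have hIH := ih b' S hb'inj hb'S
      set B' : Finset U := Finset.image b' Finset.univ with hB'
      have hlastS : b (Fin.last n) ∈ S := hbS _
      have hlastB' : b (Fin.last n) ∉ B' := by
        simp only [hB', mem_image, mem_univ, true_and]
        rintro ⟨i, hi⟩
        have := hbinj hi
        exact absurd this (Fin.castSucc_lt_last i).ne
      have himg : Finset.image b Finset.univ = insert (b (Fin.last n)) B' := by
        ext x
        simp only [hB', mem_image, mem_univ, true_and, mem_insert, hb', Function.comp]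
        constructor
        · rintro ⟨i, rfl⟩
          rcases Fin.eq_castSucc_or_eq_last i with ⟨j, rfl⟩ | rfl
          · exact Or.inr ⟨j, rfl⟩
          · exact Or.inl rfl
        · rintro (rfl | ⟨j, rfl⟩)
          · exact ⟨_, rfl⟩
          · exact ⟨_, rfl⟩
      have hsub : S \ insert (b (Fin.last n)) B' ⊆ S.erase (b (Fin.last n)) := by
        intro x hx
        simp only [mem_sdiff, mem_insert, not_or] at hx
        exact mem_erase.2 ⟨hx.2.1, hx.1⟩
      have hins1 : insert (b (Fin.last n)) (S.erase (b (Fin.last n))) = S :=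
        insert_erase hlastS
      have hins2 : insert (b (Fin.last n)) (S \ insert (b (Fin.last n)) B') = S \ B' := by
        ext x
        simp only [mem_insert, mem_sdiff, mem_insert, not_or]
        constructor
        · rintro (rfl | ⟨h1, _, h3⟩)
          · exact ⟨hlastS, hlastB'⟩
          · exact ⟨h1, h3⟩
        · rintro ⟨h1, h2⟩
          by_cases hx : x = b (Fin.last n)
          · exact Or.inl hx
          · exact Or.inr ⟨h1, hx, h2⟩
      have hkey := hfsub _ _ (b (Fin.last n)) hsub
      rw [hins1, hins2] at hkey
      rw [Fin.sum_univ_castSucc, himg]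
      have hfin := add_le_add hIH hkey
      simp only [hb', Function.comp_apply] at hfin
      linarith

/-- For a submodular `f`, distinct `b₁,…,b_t ∈ S` and distinct `c₁,…,c_t ∉ S`:
`f(S) + Σᵢ f((S\{bᵢ})∪{cᵢ}) ≥ f(S\{b₁,…,b_t}) + Σᵢ f(S∪{cᵢ})`. -/
theorem stmt_5 {U : Type*} [Fintype U] [DecidableEq U]
    (f : Finset U → ℝ)
    (hfsub : ∀ (S T : Finset U) (u : U), S ⊆ T →
      f (insert u T) - f T ≤ f (insert u S) - f S)
    (S : Finset U) (t : ℕ) (b c : Fin t → U)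
    (hbinj : Function.Injective b) (hcinj : Function.Injective c)
    (hbS : ∀ i, b i ∈ S) (hcS : ∀ i, c i ∉ S) :
    f S + ∑ i, f (insert (c i) (S.erase (b i))) ≥
      f (S \ Finset.image b Finset.univ) + ∑ i, f (insert (c i) S) := by
  have hterm : ∀ i, f (insert (c i) S) - f (insert (c i) (S.erase (b i)))
      ≤ f S - f (S.erase (b i)) := by
    intro i
    have hsub : S.erase (b i) ⊆ insert (c i) (S.erase (b i)) := subset_insert _ _
    have h := hfsub _ _ (b i) hsub
    have h1 : insert (b i) (insert (c i) (S.erase (b i))) = insert (c i) S := by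
      rw [Finset.insert_comm, insert_erase (hbS i)]
    have h2 : insert (b i) (S.erase (b i)) = S := insert_erase (hbS i)
    rw [h1, h2] at h
    linarith
  have hsum : ∑ i, (f (insert (c i) S) - f (insert (c i) (S.erase (b i))))
      ≤ ∑ i, (f S - f (S.erase (b i))) := Finset.sum_le_sum fun i _ => hterm i
  have haux := aux_erase_sum f hfsub t b S hbinj hbS
  have h := hsum.trans haux
  rw [Finset.sum_sub_distrib] at h
  linarith
end

section
/- Let b_1, …, b_t and c_1, …, c_t be points of a finite metric space (U,d) such that B = {b_1,…,b_t} and C = {c_1,…,c_t} are disjoint t-element sets with t > 2. Then d(B,C) − Σ_{i=1}^{t} d(b_i, c_i) ≥ d(C); that is, Σ_{i=1}^{t} Σ_{j=1}^{t} d(b_i,c_j) − Σ_{i=1}^{t} d(b_i,c_i) ≥ Σ_{1≤i<j≤t} d(c_i,c_j). -/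
open Finset

/-- For disjoint `t`-element sets `B = {b₁,…,b_t}` and `C = {c₁,…,c_t}` in a metric
space with `t > 2`: `d(B,C) - Σᵢ d(bᵢ,cᵢ) ≥ d(C)`. -/
theorem stmt_8 {U : Type*} [Fintype U] [DecidableEq U] (d : U → U → ℝ)
    (hsymm : ∀ u v, d u v = d v u)
    (hnonneg : ∀ u v, 0 ≤ d u v)
    (hrefl : ∀ u, d u u = 0)
    (htri : ∀ u v w, d u w ≤ d u v + d v w)
    (t : ℕ) (ht : 2 < t) (b c : Fin t → U)
    (hbinj : Function.Injective b) (hcinj : Function.Injective c)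
    (hdisj : Disjoint (Finset.image b Finset.univ) (Finset.image c Finset.univ)) :
    dispBetween d (Finset.image b Finset.univ) (Finset.image c Finset.univ) -
        ∑ i, d (b i) (c i) ≥
      dispSet d (Finset.image c Finset.univ) := by
  classical
  have hB : dispBetween d (Finset.image b Finset.univ) (Finset.image c Finset.univ)
      = ∑ i, ∑ j, d (b i) (c j) := by
    unfold dispBetween
    rw [Finset.sum_image (fun x _ y _ h => hbinj h)]
    exact Finset.sum_congr rfl fun i _ => Finset.sum_image (fun x _ y _ h => hcinj h)
  have hC : dispSet d (Finset.image c Finset.univ)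
      = (∑ i, ∑ j, d (c i) (c j)) / 2 := by
    unfold dispSet
    rw [Finset.sum_image (fun x _ y _ h => hcinj h)]
    congr 1
    exact Finset.sum_congr rfl fun i _ => Finset.sum_image (fun x _ y _ h => hcinj h)
  rw [hB, hC, ge_iff_le]
  -- off-diagonal sums
  set S : ℝ := ∑ i, ∑ j ∈ Finset.univ \ {i}, d (b i) (c j) with hSdef
  set D : ℝ := ∑ i, ∑ j ∈ Finset.univ \ {i}, d (c i) (c j) with hDdef
  have hcard : ∀ i j : Fin t, i ≠ j → (Finset.univ \ ({i, j} : Finset (Fin t))).card = t - 2 := by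
    intro i j hij
    rw [Finset.card_sdiff_of_subset (Finset.subset_univ _), Finset.card_pair hij]
    simp
  -- diagonal of C sum is zero
  have hDfull : ∑ i, ∑ j, d (c i) (c j) = D := by
    apply Finset.sum_congr rfl
    intro i _
    rw [Finset.sum_sdiff_eq_sub (Finset.subset_univ _), Finset.sum_singleton, hrefl, sub_zero]
  -- split the B-C sum
  have hsplit : ∑ i, ∑ j, d (b i) (c j) - ∑ i, d (b i) (c i) = S := by
    rw [← Finset.sum_sub_distrib]
    apply Finset.sum_congr rfl
    intro i _
    rw [Finset.sum_sdiff_eq_sub (Finset.subset_univ _), Finset.sum_singleton]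
  -- key triple-sum inequality
  have key : ∑ i, ∑ j ∈ Finset.univ \ {i}, ∑ _k ∈ Finset.univ \ ({i, j} : Finset (Fin t)),
        d (c i) (c j)
      ≤ ∑ i, ∑ j ∈ Finset.univ \ {i}, ∑ k ∈ Finset.univ \ ({i, j} : Finset (Fin t)),
        (d (b k) (c i) + d (b k) (c j)) := by
    apply Finset.sum_le_sum; intro i _
    apply Finset.sum_le_sum; intro j _
    apply Finset.sum_le_sum; intro k _
    calc d (c i) (c j) ≤ d (c i) (b k) + d (b k) (c j) := htri _ _ _
      _ = d (b k) (c i) + d (b k) (c j) := by rw [hsymm (c i) (b k)]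
  -- LHS of key = (t-2) • D
  have hL : ∑ i, ∑ j ∈ Finset.univ \ {i}, ∑ _k ∈ Finset.univ \ ({i, j} : Finset (Fin t)),
        d (c i) (c j) = (t - 2) • D := by
    rw [hDdef, Finset.smul_sum]
    apply Finset.sum_congr rfl; intro i _
    rw [Finset.smul_sum]
    apply Finset.sum_congr rfl; intro j hj
    rw [Finset.sum_const, hcard i j]
    intro h; subst h; simp at hj
  -- swap lemma for double off-diagonal sums
  have hswap : ∀ f : Fin t → Fin t → ℝ,
      ∑ i, ∑ j ∈ Finset.univ \ {i}, f i j = ∑ j, ∑ i ∈ Finset.univ \ {j}, f i j := by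
    intro f
    apply Finset.sum_comm'
    intro i j
    simp only [Finset.mem_univ, Finset.mem_sdiff, Finset.mem_singleton, true_and, and_true]
    tauto
  -- first RHS part equals (t-2) • S'
  have hS' : ∑ i, ∑ k ∈ Finset.univ \ {i}, d (b k) (c i) = S := by
    rw [hSdef]
    rw [hswap (fun i k => d (b k) (c i))]
  have hR1 : ∑ i, ∑ j ∈ Finset.univ \ {i}, ∑ k ∈ Finset.univ \ ({i, j} : Finset (Fin t)),
        d (b k) (c i) = (t - 2) • S := by
    rw [← hS', Finset.smul_sum]
    apply Finset.sum_congr rfl; intro i _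
    -- swap j and k inside
    rw [show (∑ j ∈ Finset.univ \ {i}, ∑ k ∈ Finset.univ \ ({i, j} : Finset (Fin t)),
          d (b k) (c i))
        = ∑ k ∈ Finset.univ \ {i}, ∑ j ∈ Finset.univ \ ({i, k} : Finset (Fin t)),
          d (b k) (c i) from by
      apply Finset.sum_comm'
      intro j k
      simp only [Finset.mem_univ, Finset.mem_sdiff, Finset.mem_singleton, Finset.mem_insert,
        true_and, and_true, not_or]
      tauto]
    rw [Finset.smul_sum]
    apply Finset.sum_congr rfl; intro k hk
    rw [Finset.sum_const, hcard i k]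
    intro h; subst h; simp at hk
  -- second RHS part also equals (t-2) • S
  have hR2 : ∑ i, ∑ j ∈ Finset.univ \ {i}, ∑ k ∈ Finset.univ \ ({i, j} : Finset (Fin t)),
        d (b k) (c j) = (t - 2) • S := by
    rw [hswap (fun i j => ∑ k ∈ Finset.univ \ ({i, j} : Finset (Fin t)), d (b k) (c j)), ← hR1]
    apply Finset.sum_congr rfl; intro j _
    apply Finset.sum_congr rfl; intro i _
    congr 1
    rw [Finset.pair_comm]
  have hRHS : ∑ i, ∑ j ∈ Finset.univ \ {i}, ∑ k ∈ Finset.univ \ ({i, j} : Finset (Fin t)),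
        (d (b k) (c i) + d (b k) (c j)) = (t - 2) • S + (t - 2) • S := by
    simp only [Finset.sum_add_distrib]
    rw [hR1, hR2]
  rw [hL, hRHS] at key
  have ht2 : (0 : ℝ) < (t - 2 : ℕ) := by
    have : 0 < t - 2 := by omega
    exact_mod_cast this
  rw [nsmul_eq_mul, nsmul_eq_mul] at key
  have hDS : D ≤ 2 * S := by nlinarith
  rw [hsplit, hDfull]
  linarith
end

section
/- Let S and O be finite subsets of a finite metric space (U,d) with |S| = |O|, write S∖O = {b_1, …, b_t} and O∖S = {c_1, …, c_t} with t ≥ 2 (paired by an arbitrary indexing), and assume that S∩O ≠ ∅ in case t = 2. Then Σ_{i=1}^{t} d((S∖{b_i})∪{c_i}) ≥ (t−2)·d(S) + d(O). -/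
open Finset

noncomputable def Dsum {U : Type*} (d : U → U → ℝ) (S : Finset U) : ℝ :=
  ∑ u ∈ S, ∑ v ∈ S, d u v

lemma dispSet_eq {U : Type*} (d : U → U → ℝ) (S : Finset U) :
    dispSet d S = Dsum d S / 2 := rfl

lemma Dsum_insert {U : Type*} [DecidableEq U] (d : U → U → ℝ)
    (hsymm : ∀ u v, d u v = d v u) (hrefl : ∀ u, d u u = 0)
    {T : Finset U} {x : U} (hx : x ∉ T) :
    Dsum d (insert x T) = Dsum d T + 2 * ∑ v ∈ T, d x v := by
  unfold Dsum
  rw [Finset.sum_insert hx, Finset.sum_insert hx, hrefl]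
  rw [Finset.sum_congr rfl (fun u (_ : u ∈ T) => Finset.sum_insert hx (f := d u)),
    Finset.sum_add_distrib]
  rw [Finset.sum_congr rfl (fun u (_ : u ∈ T) => hsymm u x)]
  ring

lemma Dsum_erase {U : Type*} [DecidableEq U] (d : U → U → ℝ)
    (hsymm : ∀ u v, d u v = d v u) (hrefl : ∀ u, d u u = 0)
    {S : Finset U} {x : U} (hx : x ∈ S) :
    Dsum d (S.erase x) = Dsum d S - 2 * ∑ v ∈ S, d x v := by
  have h := Dsum_insert d hsymm hrefl (T := S.erase x) (x := x) (Finset.notMem_erase x S)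
  rw [Finset.insert_erase hx] at h
  have h2 : ∑ v ∈ S.erase x, d x v = ∑ v ∈ S, d x v - d x x :=
    Finset.sum_erase_eq_sub hx
  rw [hrefl] at h2
  linarith

lemma Dsum_union {U : Type*} [DecidableEq U] (d : U → U → ℝ)
    (hsymm : ∀ u v, d u v = d v u)
    {A B : Finset U} (hdisj : Disjoint A B) :
    Dsum d (A ∪ B) = Dsum d A + Dsum d B + 2 * ∑ a ∈ A, ∑ x ∈ B, d a x := by
  unfold Dsum
  rw [Finset.sum_union hdisj]
  rw [Finset.sum_congr rfl (fun u (_ : u ∈ A) => Finset.sum_union hdisj (f := d u)),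
    Finset.sum_congr rfl (fun u (_ : u ∈ B) => Finset.sum_union hdisj (f := d u)),
    Finset.sum_add_distrib, Finset.sum_add_distrib]
  have h : ∑ u ∈ B, ∑ v ∈ A, d u v = ∑ a ∈ A, ∑ x ∈ B, d a x := by
    rw [Finset.sum_comm]
    exact Finset.sum_congr rfl fun a _ => Finset.sum_congr rfl fun x _ => hsymm x a
  rw [h]
  ring

lemma offdiag_sum {α : Type*} [DecidableEq α] (A : Finset α) (g : α → ℝ) :
    ∑ j ∈ A, ∑ k ∈ A.erase j, g k = (A.card : ℝ) * (∑ k ∈ A, g k) - ∑ k ∈ A, g k := by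
  rw [Finset.sum_congr rfl (fun j hj => Finset.sum_erase_eq_sub hj (f := g)),
    Finset.sum_sub_distrib, Finset.sum_const, nsmul_eq_mul]


lemma key3 {U : Type*} (d : U → U → ℝ)
    (hsymm : ∀ u v, d u v = d v u) (hrefl : ∀ u, d u u = 0)
    (htri : ∀ u v w, d u w ≤ d u v + d v w)
    {t : ℕ} (ht : 3 ≤ t) (b c : Fin t → U) :
    ∑ i, ∑ j, d (c i) (c j) ≤
      2 * ((∑ i, ∑ k, d (c i) (b k)) - ∑ i, d (c i) (b i)) := by
  have hcard : ∀ i : Fin t, ((univ : Finset (Fin t)).erase i).card = t - 1 := by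
    intro i
    rw [Finset.card_erase_of_mem (Finset.mem_univ i), Finset.card_univ, Fintype.card_fin]
  have hcard2 : ∀ i j : Fin t, j ≠ i → (((univ : Finset (Fin t)).erase i).erase j).card = t - 2 := by
    intro i j hne
    rw [Finset.card_erase_of_mem (Finset.mem_erase.2 ⟨hne, Finset.mem_univ j⟩), hcard]
    omega
  have hcast1 : ((t - 1 : ℕ) : ℝ) = (t : ℝ) - 1 := by
    rw [Nat.cast_sub (by omega : 1 ≤ t)]; norm_num
  have hcast2 : ((t - 2 : ℕ) : ℝ) = (t : ℝ) - 2 := by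
    rw [Nat.cast_sub (by omega : 2 ≤ t)]; norm_num
  set G : Fin t → ℝ := fun i => ∑ k ∈ univ.erase i, d (c i) (b k) with hG
  set H : Fin t → ℝ := fun j => ∑ k ∈ univ.erase j, d (b k) (c j) with hH
  have hGsum : ∑ i, G i = (∑ i, ∑ k, d (c i) (b k)) - ∑ i, d (c i) (b i) := by
    rw [← Finset.sum_sub_distrib]
    exact Finset.sum_congr rfl fun i _ => Finset.sum_erase_eq_sub (Finset.mem_univ i)
  have hHG : ∀ j, H j = G j := by
    intro j
    exact Finset.sum_congr rfl fun k _ => hsymm (b k) (c j)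
  -- remove the diagonal
  have hdiag : ∑ i, ∑ j, d (c i) (c j) = ∑ i, ∑ j ∈ univ.erase i, d (c i) (c j) := by
    refine Finset.sum_congr rfl fun i _ => ?_
    rw [Finset.sum_erase_eq_sub (Finset.mem_univ i), hrefl, sub_zero]
  -- pointwise triangle bound
  have step : ∀ i : Fin t, ∀ j ∈ (univ : Finset (Fin t)).erase i,
      ((t : ℝ) - 2) * d (c i) (c j) ≤
        ∑ k ∈ ((univ : Finset (Fin t)).erase i).erase j, (d (c i) (b k) + d (b k) (c j)) := by
    intro i j hj
    have hjne : j ≠ i := (Finset.mem_erase.1 hj).1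
    have h := Finset.card_nsmul_le_sum (((univ : Finset (Fin t)).erase i).erase j)
      (fun k => d (c i) (b k) + d (b k) (c j)) (d (c i) (c j))
      (fun k _ => htri (c i) (b k) (c j))
    rw [nsmul_eq_mul, hcard2 i j hjne, hcast2] at h
    exact h
  -- the P part
  have hP : ∀ i : Fin t,
      ∑ j ∈ univ.erase i, ∑ k ∈ (univ.erase i).erase j, d (c i) (b k)
        = ((t : ℝ) - 2) * G i := by
    intro i
    rw [offdiag_sum, hcard, hcast1, hG]
    ring
  -- the Q part, after swapping i and j
  have hQswap : ∑ i : Fin t, ∑ j ∈ univ.erase i, ∑ k ∈ (univ.erase i).erase j, d (b k) (c j)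
      = ∑ j : Fin t, ∑ i ∈ univ.erase j, ∑ k ∈ (univ.erase i).erase j, d (b k) (c j) := by
    refine Finset.sum_comm' ?_
    intro x y
    simp only [Finset.mem_univ, Finset.mem_erase, true_and, and_true]
    exact ne_comm
  have hQ : ∀ j : Fin t,
      ∑ i ∈ univ.erase j, ∑ k ∈ (univ.erase i).erase j, d (b k) (c j)
        = ((t : ℝ) - 2) * H j := by
    intro j
    have h1 : ∀ i ∈ (univ : Finset (Fin t)).erase j,
        ∑ k ∈ ((univ : Finset (Fin t)).erase i).erase j, d (b k) (c j)
          = ∑ k ∈ ((univ : Finset (Fin t)).erase j).erase i, d (b k) (c j) := by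
      intro i _
      rw [Finset.erase_right_comm]
    rw [Finset.sum_congr rfl h1, offdiag_sum, hcard, hcast1, hH]
    ring
  -- main chain
  have main : ((t : ℝ) - 2) * (∑ i, ∑ j, d (c i) (c j))
      ≤ ((t : ℝ) - 2) * (2 * ((∑ i, ∑ k, d (c i) (b k)) - ∑ i, d (c i) (b i))) := by
    rw [hdiag]
    calc ((t : ℝ) - 2) * ∑ i, ∑ j ∈ univ.erase i, d (c i) (c j)
        = ∑ i, ∑ j ∈ univ.erase i, ((t : ℝ) - 2) * d (c i) (c j) := by
          simp only [Finset.mul_sum]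
      _ ≤ ∑ i, ∑ j ∈ univ.erase i, ∑ k ∈ (univ.erase i).erase j,
            (d (c i) (b k) + d (b k) (c j)) :=
          Finset.sum_le_sum fun i _ => Finset.sum_le_sum fun j hj => step i j hj
      _ = (∑ i, ∑ j ∈ univ.erase i, ∑ k ∈ (univ.erase i).erase j, d (c i) (b k))
          + ∑ i, ∑ j ∈ univ.erase i, ∑ k ∈ (univ.erase i).erase j, d (b k) (c j) := by
          simp only [Finset.sum_add_distrib]
      _ = (∑ i, ((t : ℝ) - 2) * G i) + ∑ j, ((t : ℝ) - 2) * H j := by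
          rw [hQswap]
          congr 1
          · exact Finset.sum_congr rfl fun i _ => hP i
          · exact Finset.sum_congr rfl fun j _ => hQ j
      _ = ((t : ℝ) - 2) * (2 * ((∑ i, ∑ k, d (c i) (b k)) - ∑ i, d (c i) (b i))) := by
          rw [← Finset.mul_sum, ← Finset.mul_sum,
            Finset.sum_congr rfl (fun j (_ : j ∈ (univ : Finset (Fin t))) => hHG j), hGsum]
          ring
  have hpos : (0 : ℝ) < (t : ℝ) - 2 := by
    have : (3 : ℝ) ≤ (t : ℝ) := by exact_mod_cast ht
    linarith
  exact le_of_mul_le_mul_left main hpos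

lemma key2 {U : Type*} (d : U → U → ℝ)
    (hsymm : ∀ u v, d u v = d v u) (hnonneg : ∀ u v, 0 ≤ d u v)
    (hrefl : ∀ u, d u u = 0) (htri : ∀ u v w, d u w ≤ d u v + d v w)
    (A : Finset U) (a : U) (ha : a ∈ A) (b c : Fin 2 → U) :
    ∑ i, ∑ j, d (c i) (c j) ≤
      2 * ((∑ i, ∑ k, d (c i) (b k)) - ∑ i, d (c i) (b i))
        + 2 * ∑ x ∈ A, ∑ i, d x (b i) := by
  have hEAB : d a (b 0) + d a (b 1) ≤ ∑ x ∈ A, ∑ i, d x (b i) := by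
    have h := Finset.single_le_sum (f := fun x => ∑ i, d x (b i))
      (fun x _ => Finset.sum_nonneg fun i _ => hnonneg x (b i)) ha
    simpa [Fin.sum_univ_two] using h
  have t1 := htri (c 0) (b 1) (c 1)
  have t2 := htri (b 1) a (c 1)
  have t3 := htri a (b 0) (c 1)
  have s1 := hsymm (b 1) a
  have s2 := hsymm (b 0) (c 1)
  have s3 := hsymm (c 1) (c 0)
  simp only [Fin.sum_univ_two, hrefl] at hEAB ⊢
  linarith

/-- For sets `S`, `O` of equal cardinality in a metric space, with
`S \ O = {b₁,…,b_t}`, `O \ S = {c₁,…,c_t}`, `t ≥ 2`, and `S ∩ O ≠ ∅` when `t = 2`: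
`Σᵢ d((S\{bᵢ})∪{cᵢ}) ≥ (t-2)·d(S) + d(O)`. -/
theorem stmt_9 {U : Type*} [Fintype U] [DecidableEq U] (d : U → U → ℝ)
    (hsymm : ∀ u v, d u v = d v u)
    (hnonneg : ∀ u v, 0 ≤ d u v)
    (hrefl : ∀ u, d u u = 0)
    (htri : ∀ u v w, d u w ≤ d u v + d v w)
    (S O : Finset U) (hcard : S.card = O.card)
    (t : ℕ) (ht : 2 ≤ t) (b c : Fin t → U)
    (hbinj : Function.Injective b) (hcinj : Function.Injective c)
    (hbim : Finset.image b Finset.univ = S \ O)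
    (hcim : Finset.image c Finset.univ = O \ S)
    (hinter : t = 2 → (S ∩ O).Nonempty) :
    ∑ i, dispSet d (insert (c i) (S.erase (b i))) ≥
      ((t : ℝ) - 2) * dispSet d S + dispSet d O := by
  have hbmem : ∀ i, b i ∈ S \ O := fun i => by
    rw [← hbim]; exact Finset.mem_image_of_mem b (Finset.mem_univ i)
  have hcmem : ∀ i, c i ∈ O \ S := fun i => by
    rw [← hcim]; exact Finset.mem_image_of_mem c (Finset.mem_univ i)
  have hbS : ∀ i, b i ∈ S := fun i => (Finset.mem_sdiff.1 (hbmem i)).1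
  have hcS : ∀ i, c i ∉ S := fun i => (Finset.mem_sdiff.1 (hcmem i)).2
  -- expansion of each modified set
  have hexp : ∀ i, dispSet d (insert (c i) (S.erase (b i))) =
      dispSet d S + ((∑ v ∈ S, d (c i) v) - (∑ v ∈ S, d (b i) v) - d (c i) (b i)) := by
    intro i
    have hcnot : c i ∉ S.erase (b i) := fun h => hcS i (Finset.mem_of_mem_erase h)
    rw [dispSet_eq, dispSet_eq, Dsum_insert d hsymm hrefl hcnot,
      Dsum_erase d hsymm hrefl (hbS i),
      Finset.sum_erase_eq_sub (hbS i)]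
    ring
  have hsumexp : ∑ i, dispSet d (insert (c i) (S.erase (b i))) =
      (t : ℝ) * dispSet d S +
        ((∑ i, ∑ v ∈ S, d (c i) v) - (∑ i, ∑ v ∈ S, d (b i) v) - ∑ i, d (c i) (b i)) := by
    rw [Finset.sum_congr rfl fun i _ => hexp i, Finset.sum_add_distrib, Finset.sum_const,
      Finset.card_univ, Fintype.card_fin, nsmul_eq_mul, Finset.sum_sub_distrib,
      Finset.sum_sub_distrib]
  -- decompositions of S and O
  have hSdec : S ∩ O ∪ S \ O = S := by
    ext x; simp only [Finset.mem_union, Finset.mem_sdiff, Finset.mem_inter]; tauto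
  have hOdec : S ∩ O ∪ O \ S = O := by
    ext x; simp only [Finset.mem_union, Finset.mem_sdiff, Finset.mem_inter]; tauto
  have hdisjB : Disjoint (S ∩ O) (S \ O) := by
    rw [Finset.disjoint_left]
    intro x hx hx2
    exact (Finset.mem_sdiff.1 hx2).2 (Finset.mem_inter.1 hx).2
  have hdisjC : Disjoint (S ∩ O) (O \ S) := by
    rw [Finset.disjoint_left]
    intro x hx hx2
    exact (Finset.mem_sdiff.1 hx2).2 (Finset.mem_inter.1 hx).1
  -- sums over the images
  have himgB : ∀ f : U → ℝ, ∑ x ∈ S \ O, f x = ∑ i, f (b i) := by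
    intro f; rw [← hbim, Finset.sum_image (fun x _ y _ h => hbinj h)]
  have himgC : ∀ f : U → ℝ, ∑ x ∈ O \ S, f x = ∑ i, f (c i) := by
    intro f; rw [← hcim, Finset.sum_image (fun x _ y _ h => hcinj h)]
  have hDB : Dsum d (S \ O) = ∑ i, ∑ j, d (b i) (b j) := by
    unfold Dsum
    rw [himgB (fun u => ∑ v ∈ S \ O, d u v)]
    exact Finset.sum_congr rfl fun i _ => himgB (d (b i))
  have hDC : Dsum d (O \ S) = ∑ i, ∑ j, d (c i) (c j) := by
    unfold Dsum
    rw [himgC (fun u => ∑ v ∈ O \ S, d u v)]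
    exact Finset.sum_congr rfl fun i _ => himgC (d (c i))
  have hEABeq : ∑ x ∈ S ∩ O, ∑ y ∈ S \ O, d x y = ∑ x ∈ S ∩ O, ∑ i, d x (b i) :=
    Finset.sum_congr rfl fun x _ => himgB (d x)
  have hEACeq : ∑ x ∈ S ∩ O, ∑ y ∈ O \ S, d x y = ∑ x ∈ S ∩ O, ∑ i, d x (c i) :=
    Finset.sum_congr rfl fun x _ => himgC (d x)
  have fS : Dsum d S = Dsum d (S ∩ O) + (∑ i, ∑ j, d (b i) (b j))
      + 2 * ∑ x ∈ S ∩ O, ∑ i, d x (b i) := by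
    calc Dsum d S = Dsum d (S ∩ O ∪ S \ O) := by rw [hSdec]
      _ = _ := by rw [Dsum_union d hsymm hdisjB, hDB, hEABeq]
  have fO : Dsum d O = Dsum d (S ∩ O) + (∑ i, ∑ j, d (c i) (c j))
      + 2 * ∑ x ∈ S ∩ O, ∑ i, d x (c i) := by
    calc Dsum d O = Dsum d (S ∩ O ∪ O \ S) := by rw [hOdec]
      _ = _ := by rw [Dsum_union d hsymm hdisjC, hDC, hEACeq]
  -- cross sums against S
  have fBS : ∑ i, ∑ v ∈ S, d (b i) v =
      (∑ x ∈ S ∩ O, ∑ i, d x (b i)) + ∑ i, ∑ j, d (b i) (b j) := by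
    have h1 : ∀ i : Fin t, ∑ v ∈ S, d (b i) v =
        (∑ v ∈ S ∩ O, d (b i) v) + ∑ j, d (b i) (b j) := by
      intro i
      calc ∑ v ∈ S, d (b i) v = ∑ v ∈ S ∩ O ∪ S \ O, d (b i) v := by rw [hSdec]
        _ = _ := by rw [Finset.sum_union hdisjB, himgB (d (b i))]
    rw [Finset.sum_congr rfl fun i _ => h1 i, Finset.sum_add_distrib]
    congr 1
    rw [Finset.sum_comm]
    exact Finset.sum_congr rfl fun x _ => Finset.sum_congr rfl fun i _ => hsymm (b i) x
  have fCS : ∑ i, ∑ v ∈ S, d (c i) v =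
      (∑ x ∈ S ∩ O, ∑ i, d x (c i)) + ∑ i, ∑ j, d (c i) (b j) := by
    have h1 : ∀ i : Fin t, ∑ v ∈ S, d (c i) v =
        (∑ v ∈ S ∩ O, d (c i) v) + ∑ j, d (c i) (b j) := by
      intro i
      calc ∑ v ∈ S, d (c i) v = ∑ v ∈ S ∩ O ∪ S \ O, d (c i) v := by rw [hSdec]
        _ = _ := by rw [Finset.sum_union hdisjB, himgB (d (c i))]
    rw [Finset.sum_congr rfl fun i _ => h1 i, Finset.sum_add_distrib]
    congr 1
    rw [Finset.sum_comm]
    exact Finset.sum_congr rfl fun x _ => Finset.sum_congr rfl fun i _ => hsymm (c i) x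
  -- nonnegativity
  have hDA0 : 0 ≤ Dsum d (S ∩ O) :=
    Finset.sum_nonneg fun u _ => Finset.sum_nonneg fun v _ => hnonneg u v
  have hEAB0 : 0 ≤ ∑ x ∈ S ∩ O, ∑ i, d x (b i) :=
    Finset.sum_nonneg fun x _ => Finset.sum_nonneg fun i _ => hnonneg x (b i)
  -- the key inequality
  have key : ∑ i, ∑ j, d (c i) (c j) ≤
      2 * ((∑ i, ∑ j, d (c i) (b j)) - ∑ i, d (c i) (b i))
        + 2 * (∑ x ∈ S ∩ O, ∑ i, d x (b i)) + Dsum d (S ∩ O) := by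
    rcases Nat.lt_or_ge t 3 with h3 | h3
    · have ht2 : t = 2 := by omega
      subst ht2
      obtain ⟨a, ha⟩ := hinter rfl
      have h := key2 d hsymm hnonneg hrefl htri (S ∩ O) a ha b c
      linarith
    · have h := key3 d hsymm hrefl htri h3 b c
      linarith
  rw [ge_iff_le, hsumexp, fCS, fBS, dispSet_eq d S, dispSet_eq d O, fS, fO]
  linarith
end

section
/- Let (U,d) be a finite metric space, w: U → ℝ non-negative weights, λ ≥ 0, and let S ⊆ U be partitioned into disjoint sets Z and Y with Y nonempty. Then there exists z ∈ Y such that w(z) + λ·Σ_{v∈S∖{z}} d(z,v) ≤ (1/|Y|)·( Σ_{y∈Y} w(y) + 2λ·d(Y) + λ·d(Z,Y) ). -/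
open Finset

/-- If `S = Z ∪ Y` with `Z`, `Y` disjoint and `Y` nonempty, then there exists `z ∈ Y`
with `w(z) + λ·Σ_{v ∈ S\{z}} d(z,v) ≤ (1/|Y|)·(Σ_{y∈Y} w(y) + 2λ·d(Y) + λ·d(Z,Y))`. -/
theorem stmt_10 {U : Type*} [Fintype U] [DecidableEq U] (d : U → U → ℝ)
    (hsymm : ∀ u v, d u v = d v u)
    (hnonneg : ∀ u v, 0 ≤ d u v)
    (hrefl : ∀ u, d u u = 0)
    (htri : ∀ u v w, d u w ≤ d u v + d v w)
    (w : U → ℝ) (hw : ∀ u, 0 ≤ w u)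
    (lam : ℝ) (hlam : 0 ≤ lam)
    (Z Y : Finset U) (hZY : Disjoint Z Y) (hY : Y.Nonempty) :
    ∃ z ∈ Y,
      w z + lam * ∑ v ∈ (Z ∪ Y).erase z, d z v ≤
        (1 / (Y.card : ℝ)) *
          (∑ y ∈ Y, w y + 2 * lam * dispSet d Y + lam * dispBetween d Z Y) := by
  set T : ℝ := ∑ y ∈ Y, w y + 2 * lam * dispSet d Y + lam * dispBetween d Z Y with hT
  have hn : (0:ℝ) < (Y.card : ℝ) := by
    exact_mod_cast Finset.card_pos.mpr hY
  have hsum : ∑ z ∈ Y, (w z + lam * ∑ v ∈ (Z ∪ Y).erase z, d z v) = T := by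
    have herase : ∀ z ∈ Y, ∑ v ∈ (Z ∪ Y).erase z, d z v = ∑ v ∈ Z ∪ Y, d z v := by
      intro z hz
      exact Finset.sum_erase _ (hrefl z)
    rw [Finset.sum_congr rfl (fun z hz => by rw [herase z hz])]
    have hsplit : ∀ z, ∑ v ∈ Z ∪ Y, d z v = ∑ v ∈ Z, d z v + ∑ v ∈ Y, d z v := by
      intro z; exact Finset.sum_union hZY
    simp_rw [hsplit, mul_add, Finset.sum_add_distrib]
    have h1 : ∑ z ∈ Y, ∑ v ∈ Z, d z v = dispBetween d Z Y := by
      rw [dispBetween, Finset.sum_comm]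
      exact Finset.sum_congr rfl fun z _ => Finset.sum_congr rfl fun v _ => (hsymm z v).symm
    have h2 : ∑ z ∈ Y, ∑ v ∈ Y, d z v = 2 * dispSet d Y := by
      rw [dispSet]; ring
    rw [hT]
    rw [← Finset.mul_sum, ← Finset.mul_sum, h1, h2]
    ring
  have hconst : ∑ _z ∈ Y, (1 / (Y.card : ℝ)) * T = T := by
    rw [Finset.sum_const, nsmul_eq_mul]
    field_simp
  exact Finset.exists_le_of_sum_le hY (le_of_eq (hsum.trans hconst.symm))
end

section
/- Let (U,d) be a finite metric space, w: U → ℝ non-negative weights, λ ≥ 0, φ(S) = Σ_{u∈S} w(u) + λ·d(S). Let S, O ⊆ U with |S| = |O|, set Z = O∩S, X = O∖S, Y = S∖O, and suppose X is nonempty. If Δ ≥ 0 is a real number with φ(S) + Δ < (1/3)·φ(O), then for every y ∈ Y there exists x ∈ X such that w(x) + λ·Σ_{v∈S∖{y}} d(x,v) > (1/|X|)·( 2φ(Z) + 3φ(Y) + 3λ·d(Z,Y) + 3Δ ). -/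
/-!
Write `Z = O ∩ S`, `X = O \ S`, `Y = S \ O`, so that `O = Z ⊔ X` and `S = Z ⊔ Y`. Expanding `φ`
over these splittings, the hypothesis `3 (φ(S) + Δ) < φ(O)` says that
`2φ(Z) + 3φ(Y) + 3λ·d(Z,Y) + 3Δ < φ(X) + λ·d(Z,X)`. Summed over `x ∈ X`, the marginal quantities
`w(x) + λ·d(x, S \ {y})` give `w(X) + λ·d(X,Z) + λ·d(X, Y \ {y})`, and since
`|X| = |Y \ {y}| + 1`, routing every pair of `X` through every point of `Y \ {y}` with the triangle
inequality gives `d(X) ≤ d(X, Y \ {y})`. So the sum exceeds the right-hand side, and some summand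
exceeds the average.
-/

open Finset

/-- The max-sum diversification objective `φ(S) = Σ_{u∈S} w(u) + λ·d(S)`
for a modular quality function given by weights `w`. -/
noncomputable def obj {U : Type*} (w : U → ℝ) (lam : ℝ) (d : U → U → ℝ)
    (S : Finset U) : ℝ :=
  ∑ u ∈ S, w u + lam * dispSet d S

lemma Finset.exists_one_div_card_mul_lt_of_lt_sum {ι : Type*} {s : Finset ι} (hs : s.Nonempty)
    {f : ι → ℝ} {c : ℝ} (h : c < ∑ i ∈ s, f i) : ∃ i ∈ s, 1 / #s * c < f i := by
  have hcard : (0 : ℝ) < #s := by exact_mod_cast hs.card_pos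
  refine exists_lt_of_sum_lt ?_
  rwa [sum_const, nsmul_eq_mul, ← mul_assoc, mul_one_div_cancel hcard.ne', one_mul]

section Dispersion

variable {U : Type*} {d : U → U → ℝ}

lemma dispBetween_comm (hsymm : ∀ u v, d u v = d v u) (A B : Finset U) :
    dispBetween d A B = dispBetween d B A := by
  rw [dispBetween, sum_comm]
  exact sum_congr rfl fun b _ => sum_congr rfl fun a _ => hsymm a b

variable [DecidableEq U]

lemma dispBetween_union_right {B C : Finset U} (h : Disjoint B C) (A : Finset U) :
    dispBetween d A (B ∪ C) = dispBetween d A B + dispBetween d A C := by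
  simp only [dispBetween, sum_union h, sum_add_distrib]

lemma dispSet_union (hsymm : ∀ u v, d u v = d v u) {A B : Finset U} (h : Disjoint A B) :
    dispSet d (A ∪ B) = dispSet d A + dispSet d B + dispBetween d A B := by
  have hBA : dispBetween d B A = dispBetween d A B := dispBetween_comm hsymm B A
  simp only [dispSet, dispBetween, sum_union h, sum_add_distrib] at hBA ⊢
  rw [hBA]
  ring

lemma obj_union (w : U → ℝ) (lam : ℝ) (hsymm : ∀ u v, d u v = d v u) {A B : Finset U}
    (h : Disjoint A B) :
    obj w lam d (A ∪ B) = obj w lam d A + obj w lam d B + lam * dispBetween d A B := by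
  rw [obj, obj, obj, sum_union h, dispSet_union hsymm h]
  ring

lemma obj_eq_inter_add_sdiff (w : U → ℝ) (lam : ℝ) (hsymm : ∀ u v, d u v = d v u)
    (A B : Finset U) : obj w lam d A =
      obj w lam d (A ∩ B) + obj w lam d (A \ B) + lam * dispBetween d (A ∩ B) (A \ B) := by
  conv_lhs => rw [← sup_inf_sdiff A B]
  exact obj_union w lam hsymm disjoint_inf_sdiff

lemma sum_sum_le_two_mul_card_sub_one_mul_sum (hsymm : ∀ u v, d u v = d v u)
    (hrefl : ∀ u, d u u = 0) (htri : ∀ u v w, d u w ≤ d u v + d v w) (X : Finset U) (z : U) :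
    ∑ u ∈ X, ∑ v ∈ X, d u v ≤ 2 * (#X - 1) * ∑ u ∈ X, d u z := by
  have hoff (u : U) (hu : u ∈ X) :
      ∑ v ∈ X.erase u, (d u z + d v z) = (#X - 1) * d u z + (∑ v ∈ X, d v z - d u z) := by
    rw [sum_add_distrib, sum_const, card_erase_of_mem hu, sum_erase_eq_sub hu, nsmul_eq_mul,
      Nat.cast_sub (card_pos.2 ⟨u, hu⟩), Nat.cast_one]
  calc ∑ u ∈ X, ∑ v ∈ X, d u v
      = ∑ u ∈ X, ∑ v ∈ X.erase u, d u v :=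
        sum_congr rfl fun u _ => (sum_erase _ (hrefl u)).symm
    _ ≤ ∑ u ∈ X, ∑ v ∈ X.erase u, (d u z + d v z) :=
        sum_le_sum fun u _ => sum_le_sum fun v _ => hsymm z v ▸ htri u z v
    _ = 2 * (#X - 1) * ∑ u ∈ X, d u z := by
        rw [sum_congr rfl hoff, sum_add_distrib, sum_sub_distrib, ← mul_sum, sum_const,
          nsmul_eq_mul]
        ring

lemma card_mul_dispSet_le (hsymm : ∀ u v, d u v = d v u)
    (hrefl : ∀ u, d u u = 0) (htri : ∀ u v w, d u w ≤ d u v + d v w) (X T : Finset U) :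
    #T * dispSet d X ≤ (#X - 1) * dispBetween d X T := by
  calc #T * dispSet d X = (∑ _z ∈ T, ∑ u ∈ X, ∑ v ∈ X, d u v) / 2 := by
        rw [sum_const, nsmul_eq_mul, dispSet]
        ring
    _ ≤ (∑ z ∈ T, 2 * (#X - 1) * ∑ u ∈ X, d u z) / 2 := by
        gcongr with z
        exact sum_sum_le_two_mul_card_sub_one_mul_sum hsymm hrefl htri X z
    _ = (#X - 1) * dispBetween d X T := by
        rw [← mul_sum, dispBetween, sum_comm]
        ring

lemma dispSet_le_dispBetween_of_card_eq_succ (hsymm : ∀ u v, d u v = d v u)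
    (hrefl : ∀ u, d u u = 0) (htri : ∀ u v w, d u w ≤ d u v + d v w) {X T : Finset U}
    (hc : #X = #T + 1) :
    dispSet d X ≤ dispBetween d X T := by
  rcases T.eq_empty_or_nonempty with rfl | hT
  · obtain ⟨x, rfl⟩ := card_eq_one.mp hc
    simp [dispSet, dispBetween, hrefl]
  · have hbound := card_mul_dispSet_le hsymm hrefl htri X T
    rw [hc, Nat.cast_add, Nat.cast_one, add_sub_cancel_right] at hbound
    exact le_of_mul_le_mul_left hbound (by exact_mod_cast hT.card_pos)

end Dispersion

theorem stmt_11_general {U : Type*} [DecidableEq U] (d : U → U → ℝ)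
    (hsymm : ∀ u v, d u v = d v u)
    (hrefl : ∀ u, d u u = 0)
    (htri : ∀ u v w, d u w ≤ d u v + d v w)
    (w : U → ℝ)
    (lam : ℝ) (hlam : 0 ≤ lam)
    (S O : Finset U) (hcard : S.card = O.card)
    (hX : (O \ S).Nonempty)
    (Δ : ℝ)
    (h : obj w lam d S + Δ < (1 / 3) * obj w lam d O) :
    ∀ y ∈ S \ O, ∃ x ∈ O \ S,
      w x + lam * ∑ v ∈ S.erase y, d x v >
        (1 / (((O \ S).card : ℝ))) *
          (2 * obj w lam d (O ∩ S) + 3 * obj w lam d (S \ O) +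
            3 * lam * dispBetween d (O ∩ S) (S \ O) + 3 * Δ) := by
  intro y hy
  have hO := obj_eq_inter_add_sdiff w lam hsymm O S
  have hS := obj_eq_inter_add_sdiff w lam hsymm S O
  rw [inter_comm] at hS
  set Z := O ∩ S
  set X := O \ S
  set Y := S \ O
  have hZY : Disjoint Z Y := disjoint_sdiff.mono_left inter_subset_left
  have hZYS : Z ∪ Y = S := by
    rw [show Z = S ∩ O from inter_comm O S]
    exact sup_inf_sdiff S O
  have hSy : S.erase y = Z ∪ Y.erase y := by
    rw [← hZYS, erase_union_distrib,
      erase_eq_of_notMem fun hyZ => (mem_sdiff.1 hy).2 (mem_inter.1 hyZ).1]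
  have hXY : dispSet d X ≤ dispBetween d X (Y.erase y) := by
    refine dispSet_le_dispBetween_of_card_eq_succ hsymm hrefl htri ?_
    have hYpos : 0 < #Y := card_pos.2 ⟨y, hy⟩
    rw [card_erase_of_mem hy, show #X = #Y from card_sdiff_comm hcard.symm]
    omega
  refine exists_one_div_card_mul_lt_of_lt_sum hX ?_
  calc _ < obj w lam d X + lam * dispBetween d Z X := by linarith
    _ ≤ ∑ x ∈ X, w x + lam * (dispBetween d X Z + dispBetween d X (Y.erase y)) := by
        rw [obj, dispBetween_comm hsymm Z X]
        linarith [mul_le_mul_of_nonneg_left hXY hlam]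
    _ = ∑ x ∈ X, (w x + lam * ∑ v ∈ S.erase y, d x v) := by
        rw [sum_add_distrib, ← mul_sum, hSy,
          ← dispBetween_union_right (hZY.mono_right (erase_subset y Y))]
        rfl

/-- If `|S| = |O|`, `X = O\S` is nonempty, `Δ ≥ 0` and `φ(S) + Δ < (1/3)·φ(O)`, then
for every `y ∈ Y = S\O` there is `x ∈ X` with
`w(x) + λ·Σ_{v ∈ S\{y}} d(x,v) > (1/|X|)·(2φ(Z) + 3φ(Y) + 3λ·d(Z,Y) + 3Δ)`,
where `Z = O ∩ S`. -/
theorem stmt_11 {U : Type*} [Fintype U] [DecidableEq U] (d : U → U → ℝ)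
    (hsymm : ∀ u v, d u v = d v u)
    (hnonneg : ∀ u v, 0 ≤ d u v)
    (hrefl : ∀ u, d u u = 0)
    (htri : ∀ u v w, d u w ≤ d u v + d v w)
    (w : U → ℝ) (hw : ∀ u, 0 ≤ w u)
    (lam : ℝ) (hlam : 0 ≤ lam)
    (S O : Finset U) (hcard : S.card = O.card)
    (hX : (O \ S).Nonempty)
    (Δ : ℝ) (hΔ : 0 ≤ Δ)
    (h : obj w lam d S + Δ < (1 / 3) * obj w lam d O) :
    ∀ y ∈ S \ O, ∃ x ∈ O \ S,
      w x + lam * ∑ v ∈ S.erase y, d x v >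
        (1 / (((O \ S).card : ℝ))) *
          (2 * obj w lam d (O ∩ S) + 3 * obj w lam d (S \ O) +
            3 * lam * dispBetween d (O ∩ S) (S \ O) + 3 * Δ) :=
  stmt_11_general d hsymm hrefl htri w lam hlam S O hcard hX Δ h
end
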